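/- Let μ be a nonzero finite Borel measure on ℝ^D with finite second moment (∫ ‖y‖² dμ(y) < ∞), and let b = (1/μ(ℝ^D)) ∫ y dμ(y) be its barycenter. Let L be an affine subspace of ℝ^D with direction (underlying linear subspace) V. Then ∫ dist(y, b + V)² dμ(y) ≤ ∫ dist(y, L)² dμ(y); that is, translating a flat so that it passes through the barycenter does not increase the mean squared distance. -/

import Mathlib

open MeasureTheory Metric
open scoped InnerProductSpace

/-!
Orthogonal projection `P` onto `Vᗮ` turns the distance to a flat `c + V` into `‖P y - P c‖`, so
both sides are mean squared distances of the pushforward point cloud `P y` to a single point. The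
parallel-axis identity `∫ ‖X - c‖² = ∫ ‖X - m‖² + μ(univ) ‖m - c‖²`, whose cross term vanishes
because `X - m` has integral zero, shows that the mean `m = P b` is the best such point.
-/

section Mean

variable {α F : Type*} [MeasurableSpace α] [NormedAddCommGroup F] [InnerProductSpace ℝ F]
  [CompleteSpace F] {μ : Measure α} [IsFiniteMeasure μ] {X : α → F}

theorem integral_sub_mean_eq_zero (hX : Integrable X μ) :
    ∫ x, (X x - (μ Set.univ).toReal⁻¹ • ∫ z, X z ∂μ) ∂μ = 0 := by
  rcases eq_zero_or_neZero μ with rfl | _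
  · simp
  rw [integral_sub hX (integrable_const _), integral_const, measureReal_def,
    smul_inv_smul₀ (ENNReal.toReal_ne_zero.2 ⟨NeZero.ne _, measure_ne_top _ _⟩), sub_self]

theorem integral_norm_sub_sq_eq_add (hX : MemLp X 2 μ) (c : F) :
    ∫ x, ‖X x - c‖ ^ 2 ∂μ =
      ∫ x, ‖X x - (μ Set.univ).toReal⁻¹ • ∫ z, X z ∂μ‖ ^ 2 ∂μ +
        μ.real Set.univ * ‖(μ Set.univ).toReal⁻¹ • ∫ z, X z ∂μ - c‖ ^ 2 := by
  set m := (μ Set.univ).toReal⁻¹ • ∫ z, X z ∂μ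
  have hX1 : Integrable X μ := hX.integrable one_le_two
  have hcentered : Integrable (fun x => X x - m) μ := hX1.sub (integrable_const m)
  have hcross : ∫ x, ⟪X x - m, m - c⟫_ℝ ∂μ = 0 := by
    simp_rw [real_inner_comm (m - c)]
    rw [integral_inner hcentered, integral_sub_mean_eq_zero hX1, inner_zero_right]
  have hsq : Integrable (fun x => ‖X x - m‖ ^ 2) μ :=
    (hX.sub (memLp_const m)).integrable_norm_pow two_ne_zero
  calc ∫ x, ‖X x - c‖ ^ 2 ∂μ
      = ∫ x, (‖X x - m‖ ^ 2 + 2 * ⟪X x - m, m - c⟫_ℝ + ‖m - c‖ ^ 2) ∂μ := by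
        congr 1 with x
        rw [← sub_add_sub_cancel (X x) m c, norm_add_sq_real]
    _ = ∫ x, ‖X x - m‖ ^ 2 ∂μ + μ.real Set.univ * ‖m - c‖ ^ 2 := by
        have hcross_int : Integrable (fun x => 2 * ⟪X x - m, m - c⟫_ℝ) μ :=
          (hcentered.inner_const _).const_mul 2
        rw [integral_add (hsq.add hcross_int : Integrable (fun x => _ + _) μ) (integrable_const _),
          integral_add hsq hcross_int, integral_const_mul, hcross, integral_const, smul_eq_mul, mul_zero, add_zero]

theorem integral_norm_sub_mean_sq_le (hX : MemLp X 2 μ) (c : F) :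
    ∫ x, ‖X x - (μ Set.univ).toReal⁻¹ • ∫ z, X z ∂μ‖ ^ 2 ∂μ ≤ ∫ x, ‖X x - c‖ ^ 2 ∂μ := by
  rw [integral_norm_sub_sq_eq_add hX c]
  exact le_add_of_nonneg_right (by positivity)

end Mean

section Flat

variable {E : Type*} [NormedAddCommGroup E] [InnerProductSpace ℝ E]

theorem AffineSubspace.coe_mk'_eq_image_add (a : E) (V : Submodule ℝ E) :
    (AffineSubspace.mk' a V : Set E) = (a + ·) '' V := by
  ext p
  simp [Set.image_add_left, AffineSubspace.mem_mk', neg_add_eq_sub]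

theorem infDist_mk'_eq_norm_starProjection_orthogonal (V : Submodule ℝ E)
    [V.HasOrthogonalProjection] (a y : E) :
    infDist y (AffineSubspace.mk' a V : Set E) = ‖Vᗮ.starProjection (y - a)‖ := by
  rw [AffineSubspace.coe_mk'_eq_image_add, ← add_sub_cancel a y, infDist_image (isometry_add_left a),
    add_sub_cancel_left, infDist_eq_iInf, Submodule.starProjection_orthogonal,
    sub_apply, ContinuousLinearMap.id_apply, Submodule.starProjection_minimal]
  simp only [dist_eq_norm]
  rfl

end Flat

theorem distSq_barycenter_flat_le (D : ℕ) (μ : Measure (EuclideanSpace ℝ (Fin D)))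
    [IsFiniteMeasure μ]
    (hmom : Integrable (fun y => ‖y‖ ^ 2) μ)
    (L : AffineSubspace ℝ (EuclideanSpace ℝ (Fin D)))
    (hLne : (L : Set (EuclideanSpace ℝ (Fin D))).Nonempty) :
    ∫ y, infDist y ((AffineSubspace.mk' ((μ Set.univ).toReal⁻¹ • ∫ z, z ∂μ) L.direction :
        AffineSubspace ℝ (EuclideanSpace ℝ (Fin D))) :
        Set (EuclideanSpace ℝ (Fin D))) ^ 2 ∂μ ≤
      ∫ y, infDist y (L : Set (EuclideanSpace ℝ (Fin D))) ^ 2 ∂μ := by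
  obtain ⟨a, ha⟩ := hLne
  conv_rhs => rw [← AffineSubspace.mk'_eq ha]
  simp_rw [infDist_mk'_eq_norm_starProjection_orthogonal, map_sub]
  set P := L.directionᗮ.starProjection
  have hid : MemLp (fun y => y) 2 μ :=
    (memLp_two_iff_integrable_sq_norm aestronglyMeasurable_id).2 hmom
  have hmean : (μ Set.univ).toReal⁻¹ • ∫ y, P y ∂μ = P ((μ Set.univ).toReal⁻¹ • ∫ z, z ∂μ) := by
    rw [P.integral_comp_comm (hid.integrable one_le_two), map_smul]
  rw [← hmean]
  exact integral_norm_sub_mean_sq_le (P.comp_memLp' hid) (P a)
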